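/- Let A and B be nondeterministic Büchi automata over a finite alphabet Σ, viewed as finite LTSs with a predicate 'final', with B deterministic and complete, and let L_{A,B} be their disjoint union with initial states s_A and s_B. With ⟨synch⟩φ := ⋁_{a∈Σ} ⟨a⟩_x ⟨a⟩_y φ, consider φ_incl := ⟨synch⟩* νZ₁.( final(x) ∧ ¬final(y) ∧ μZ₂. ⟨synch⟩( Z₁ ∨ (¬final(y) ∧ Z₂) ) ). Then L(A) ⊆ L(B) if and only if L_{A,B}, v ⊭ φ_incl, where v(x)=s_A and v(y)=s_B. -/

import Mathlib

/-- A labeled transition system over edge labels `Λ` and atomic propositions `P`. -/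
structure LTS (Λ P : Type) where
  S : Type
  s0 : S
  Tr : S → Λ → S → Prop
  rho : S → Set P

/-- Formulas of the higher-dimensional modal μ-calculus Lμω. -/
inductive Formula (Λ P V V2 : Type) : Type
  | prop : P → V → Formula Λ P V V2
  | svar : V2 → Formula Λ P V V2
  | neg : Formula Λ P V V2 → Formula Λ P V V2
  | and : Formula Λ P V V2 → Formula Λ P V V2 → Formula Λ P V V2
  | dia : Λ → V → Formula Λ P V V2 → Formula Λ P V V2
  | mu : V2 → Formula Λ P V V2 → Formula Λ P V V2
  | repl : (V → V) → Formula Λ P V V2 → Formula Λ P V V2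

variable {Λ P V V2 : Type}

/-- Semantics of Lμω : a set of first-order valuations. -/
def sem [DecidableEq V] [DecidableEq V2] (L : LTS Λ P) :
    Formula Λ P V V2 → (V2 → Set (V → L.S)) → Set (V → L.S)
  | .prop p x, _ => {v | p ∈ L.rho (v x)}
  | .svar X, 𝒱 => 𝒱 X
  | .neg φ, 𝒱 => (sem L φ 𝒱)ᶜ
  | .and φ ψ, 𝒱 => sem L φ 𝒱 ∩ sem L ψ 𝒱
  | .dia a x φ, 𝒱 => {v | ∃ s, L.Tr (v x) a s ∧ Function.update v x s ∈ sem L φ 𝒱}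
  | .mu X φ, 𝒱 => ⋂₀ {Q | sem L φ (Function.update 𝒱 X Q) ⊆ Q}
  | .repl κ φ, 𝒱 => {v | (fun z => v (κ z)) ∈ sem L φ 𝒱}

/-- Derived operator: disjunction. -/
def Formula.or (φ ψ : Formula Λ P V V2) : Formula Λ P V V2 := .neg (.and (.neg φ) (.neg ψ))

/-- Derived operator: box modality. -/
def Formula.box (a : Λ) (x : V) (φ : Formula Λ P V V2) : Formula Λ P V V2 :=
  .neg (.dia a x (.neg φ))

/-- Replace every occurrence of the second-order variable `X` by `¬X`. -/
def Formula.substNeg [DecidableEq V2] (X : V2) : Formula Λ P V V2 → Formula Λ P V V2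
  | .prop p x => .prop p x
  | .svar Y => if Y = X then .neg (.svar Y) else .svar Y
  | .neg φ => .neg (φ.substNeg X)
  | .and φ ψ => .and (φ.substNeg X) (ψ.substNeg X)
  | .dia a x φ => .dia a x (φ.substNeg X)
  | .mu Y φ => .mu Y (φ.substNeg X)
  | .repl κ φ => .repl κ (φ.substNeg X)

/-- Derived operator: greatest fixed point, `νX.φ := ¬μX.¬φ[X:=¬X]`. -/
def Formula.nu [DecidableEq V2] (X : V2) (φ : Formula Λ P V V2) : Formula Λ P V V2 :=
  .neg (.mu X (.neg (φ.substNeg X)))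

/-- Falsity, definable as `μX.X`. -/
def Formula.bot (X : V2) : Formula Λ P V V2 := .mu X (.svar X)

/-- Truth. -/
def Formula.top (X : V2) : Formula Λ P V V2 := .neg (.bot X)

/-- Finite conjunction (`X` is a dummy second-order variable for the empty case). -/
def bigAnd (X : V2) (l : List (Formula Λ P V V2)) : Formula Λ P V V2 := l.foldr .and (.top X)

/-- Finite disjunction. -/
def bigOr (X : V2) (l : List (Formula Λ P V V2)) : Formula Λ P V V2 := l.foldr .or (.bot X)

/-- Derived operator: implication. -/
def Formula.imp (φ ψ : Formula Λ P V V2) : Formula Λ P V V2 := .neg (.and φ (.neg ψ))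

/-- Derived operator: bi-implication. -/
def Formula.iff (φ ψ : Formula Λ P V V2) : Formula Λ P V V2 := .and (φ.imp ψ) (ψ.imp φ)

/-- A run of the automaton (viewed as an LTS) on the infinite word `w`. -/
def IsRun {Alph P : Type} (A : LTS Alph P) (w : ℕ → Alph) (r : ℕ → A.S) : Prop :=
  r 0 = A.s0 ∧ ∀ i, A.Tr (r i) (w i) (r (i + 1))

/-- Determinism of an automaton. -/
def Deterministic {Alph P : Type} (A : LTS Alph P) : Prop :=
  ∀ s a t₁ t₂, A.Tr s a t₁ → A.Tr s a t₂ → t₁ = t₂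

/-- Completeness of an automaton. -/
def Complete {Alph P : Type} (A : LTS Alph P) : Prop :=
  ∀ s a, ∃ t, A.Tr s a t

/-- The disjoint union of two LTSs (with the initial state of the first one). -/
def dunion {Alph P : Type} (A B : LTS Alph P) : LTS Alph P where
  S := A.S ⊕ B.S
  s0 := .inl A.s0
  Tr := fun s a t =>
    match s, t with
    | .inl s, .inl t => A.Tr s a t
    | .inr s, .inr t => B.Tr s a t
    | _, _ => False
  rho := fun s => match s with | .inl s => A.rho s | .inr s => B.rho s

/-- `⟨synch⟩φ := ⋁_{a∈Σ} ⟨a⟩_x ⟨a⟩_y φ`, with `x`, `y` being the variables `0`, `1`. -/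
noncomputable def synch {Alph P : Type} [Fintype Alph] (φ : Formula Alph P (Fin 2) ℕ) :
    Formula Alph P (Fin 2) ℕ :=
  bigOr 9 ((Finset.univ : Finset Alph).toList.map fun a => .dia a 0 (.dia a 1 φ))

/-- The language of a nondeterministic Büchi automaton, viewed as a finite LTS whose
single atomic proposition is the predicate `final`. -/
def BuchiLang {Alph : Type} (A : LTS Alph Unit) : Set (ℕ → Alph) :=
  {w | ∃ r, IsRun A w r ∧ ∀ N, ∃ i, N ≤ i ∧ () ∈ A.rho (r i)}

/-- `final(x)` for a first-order variable `x`. -/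
def finalF {Alph : Type} (x : Fin 2) : Formula Alph Unit (Fin 2) ℕ := .prop () x

/-- The formula
`φ_incl = ⟨synch⟩* νZ₁.( final(x) ∧ ¬final(y) ∧ μZ₂.⟨synch⟩( Z₁ ∨ (¬final(y) ∧ Z₂) ) )`
where `⟨synch⟩*ψ := μZ. ψ ∨ ⟨synch⟩Z`; here `Z₁ = 0`, `Z₂ = 1`, `Z = 2`. -/
noncomputable def phiIncl (Alph : Type) [Fintype Alph] : Formula Alph Unit (Fin 2) ℕ :=
  .mu 2 (.or
    (Formula.nu 0 (.and (finalF 0) (.and (.neg (finalF 1))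
      (.mu 1 (synch (.or (.svar 0) (.and (.neg (finalF 1)) (.svar 1))))))))
    (synch (.svar 2)))

/-!
Unfolding the fixpoints, `φ_incl` holds at a pair of states iff some synchronized path from it
eventually avoids `final(y)` and visits `final(x)` infinitely often: the outer `μ` is
reachability, and the `ν`-formula holds exactly on the members of some set `Q` of
`final(x) ∧ ¬final(y)` pairs from each of which a nonempty synchronized path through
`¬final(y)` returns to `Q`. In `L_{A,B}` such a path from `(s_A, s_B)` is a word with an
accepting run of `A` and a run of `B` that is eventually never final. As `B` is deterministic
and complete, that run is the only run of `B` on the word, so such paths are exactly the words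
of `L(A) \ L(B)`.
-/

open Filter Relation

section Recurrence

variable {α : Type*} {R : α → α → Prop}

def reachIn (R : α → α → Prop) (Q : Set α) : ℕ → Set α
  | 0 => Q
  | n + 1 => {x | ∃ y ∈ reachIn R Q n, R x y}

theorem exists_mem_reachIn_of_transGen {Q : Set α} {x q : α} (h : TransGen R x q) (hq : q ∈ Q) :
    ∃ n, x ∈ reachIn R Q (n + 1) := by
  induction h using TransGen.head_induction_on with
  | single hxq => exact ⟨0, q, hq, hxq⟩
  | head hxy _ ih =>
    obtain ⟨n, hn⟩ := ih
    exact ⟨n + 1, _, hn, hxy⟩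

def IsRecurrentSet (R : α → α → Prop) (Q : Set α) : Prop :=
  ∀ q ∈ Q, ∃ q' ∈ Q, TransGen R q q'

theorem IsRecurrentSet.exists_seq_frequently_mem {Q : Set α} (hQ : IsRecurrentSet R Q) {x : α}
    (hx : x ∈ Q) :
    ∃ f : ℕ → α, f 0 = x ∧ (∀ n, R (f n) (f (n + 1))) ∧ ∃ᶠ n in atTop, f n ∈ Q := by
  -- Walk along `α × ℕ`, the second component bounding the distance to `Q`: it drops at every
  -- step taken outside `Q`, so `Q` is visited infinitely often.
  have hnext : ∀ p : α × ℕ, p.1 ∈ reachIn R Q p.2 →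
      ∃ p' : α × ℕ, p'.1 ∈ reachIn R Q p'.2 ∧ R p.1 p'.1 ∧ (p.1 ∈ Q ∨ p'.2 < p.2) := by
    rintro ⟨y, _ | n⟩ hy
    · obtain ⟨q', hq', hyq'⟩ := hQ y hy
      obtain ⟨n, z, hz, hyz⟩ := exists_mem_reachIn_of_transGen hyq' hq'
      exact ⟨(z, n), hz, hyz, Or.inl hy⟩
    · obtain ⟨z, hz, hyz⟩ := hy
      exact ⟨(z, n), hz, hyz, Or.inr n.lt_succ_self⟩
  choose! next hnext_mem hnext_rel hnext_rank using hnext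
  set g : ℕ → α × ℕ := fun k => next^[k] (x, 0)
  have hg_succ : ∀ k, g (k + 1) = next (g k) := fun k => Function.iterate_succ_apply' _ _ _
  have hg : ∀ k, (g k).1 ∈ reachIn R Q (g k).2 := by
    intro k
    induction k with
    | zero => exact hx
    | succ k ih => rw [hg_succ]; exact hnext_mem _ ih
  refine ⟨fun k => (g k).1, rfl, fun k => by simpa only [hg_succ] using hnext_rel _ (hg k),
    frequently_atTop.2 ?_⟩
  suffices ∀ m k, (g k).2 = m → ∃ j, k ≤ j ∧ (g j).1 ∈ Q from fun k => this _ k rfl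
  intro m
  induction m using Nat.strong_induction_on with
  | _ m ih =>
    intro k hk
    rcases hnext_rank _ (hg k) with hkQ | hlt
    · exact ⟨k, le_rfl, hkQ⟩
    · obtain ⟨j, hj, hjQ⟩ := ih _ (hk ▸ hg_succ k ▸ hlt) (k + 1) rfl
      exact ⟨j, by omega, hjQ⟩

theorem exists_seq_of_reflTransGen {x y : α} (h : ReflTransGen R x y) {f : ℕ → α}
    (hf0 : f 0 = y) (hf : ∀ n, R (f n) (f (n + 1))) :
    ∃ g : ℕ → α, g 0 = x ∧ (∀ n, R (g n) (g (n + 1))) ∧ ∃ k, ∀ n, g (n + k) = f n := by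
  induction h using ReflTransGen.head_induction_on with
  | refl => exact ⟨f, hf0, hf, 0, fun n => rfl⟩
  | @head a c hac _ ih =>
    obtain ⟨g, hg0, hg, k, hgk⟩ := ih
    refine ⟨fun | 0 => a | n + 1 => g n, rfl, ?_, k + 1, hgk⟩
    rintro (_ | n)
    · simpa [hg0] using hac
    · exact hg n

variable {S F : Set α}

theorem exists_fair_seq_of_isRecurrentSet {x u : α} (hxu : ReflTransGen R x u) {Q : Set α}
    (hu : u ∈ Q) (hQ : Q ⊆ F ∩ S) (hrec : IsRecurrentSet (fun a b => R a b ∧ b ∈ S) Q) :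
    ∃ f : ℕ → α, f 0 = x ∧ (∀ n, R (f n) (f (n + 1))) ∧
      (∀ᶠ n in atTop, f n ∈ S) ∧ ∃ᶠ n in atTop, f n ∈ F := by
  obtain ⟨f, hf0, hf, hfQ⟩ := hrec.exists_seq_frequently_mem hu
  obtain ⟨g, hg0, hg, k, hgk⟩ := exists_seq_of_reflTransGen hxu hf0 fun n => (hf n).1
  have hfS : ∀ n, f n ∈ S
    | 0 => hf0 ▸ (hQ hu).2
    | n + 1 => (hf n).2
  refine ⟨g, hg0, hg, eventually_atTop.2 ⟨k, fun n hn => ?_⟩, ?_⟩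
  · obtain ⟨m, rfl⟩ := Nat.exists_eq_add_of_le' hn
    exact hgk m ▸ hfS m
  · exact (tendsto_add_atTop_nat k).frequently (hfQ.mono fun n hn => hgk n ▸ (hQ hn).1)

theorem exists_isRecurrentSet_of_fair_seq {f : ℕ → α} (hf : ∀ n, R (f n) (f (n + 1)))
    (hS : ∀ᶠ n in atTop, f n ∈ S) (hF : ∃ᶠ n in atTop, f n ∈ F) :
    ∃ u, ReflTransGen R (f 0) u ∧
      ∃ Q, u ∈ Q ∧ Q ⊆ F ∩ S ∧ IsRecurrentSet (fun a b => R a b ∧ b ∈ S) Q := by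
  obtain ⟨N, hN⟩ := eventually_atTop.1 hS
  obtain ⟨m, hm, hmF⟩ := frequently_atTop.1 hF N
  refine ⟨f m, ?_, f '' {n | N ≤ n ∧ f n ∈ F}, ⟨m, ⟨hm, hmF⟩, rfl⟩, ?_, ?_⟩
  · exact (reflTransGen_of_succ_of_le (fun i j => R (f i) (f j)) (fun i _ => hf i)
      (Nat.zero_le m)).lift f fun _ _ => id
  · rintro _ ⟨n, ⟨hn, hnF⟩, rfl⟩
    exact ⟨hnF, hN n hn⟩
  · rintro _ ⟨n, ⟨hn, -⟩, rfl⟩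
    obtain ⟨n', hn', hn'F⟩ := frequently_atTop.1 hF (n + 1)
    refine ⟨f n', ⟨n', ⟨by omega, hn'F⟩, rfl⟩, ?_⟩
    refine (transGen_of_succ_of_lt (fun i j => R (f i) (f j) ∧ f j ∈ S) (fun i hi => ?_)
      (by omega)).lift f fun _ _ => id
    exact ⟨hf i, hN _ ((hn.trans hi.1).trans (Order.le_succ i))⟩

theorem exists_fair_seq_iff {x : α} :
    (∃ f : ℕ → α, f 0 = x ∧ (∀ n, R (f n) (f (n + 1))) ∧
      (∀ᶠ n in atTop, f n ∈ S) ∧ ∃ᶠ n in atTop, f n ∈ F) ↔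
    ∃ u, ReflTransGen R x u ∧
      ∃ Q, u ∈ Q ∧ Q ⊆ F ∩ S ∧ IsRecurrentSet (fun a b => R a b ∧ b ∈ S) Q := by
  constructor
  · rintro ⟨f, rfl, hf, hS, hF⟩
    exact exists_isRecurrentSet_of_fair_seq hf hS hF
  · rintro ⟨u, hxu, Q, hu, hQ, hrec⟩
    exact exists_fair_seq_of_isRecurrentSet hxu hu hQ hrec

end Recurrence

section Semantics

variable [DecidableEq V] [DecidableEq V2] {L : LTS Λ P} {𝒱 : V2 → Set (V → L.S)}

theorem mem_sem_or {φ ψ : Formula Λ P V V2} {v : V → L.S} :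
    v ∈ sem L (φ.or ψ) 𝒱 ↔ v ∈ sem L φ 𝒱 ∨ v ∈ sem L ψ 𝒱 := by
  simp only [Formula.or, sem, Set.mem_compl_iff, Set.mem_inter_iff]
  tauto

theorem sem_bot (X : V2) : sem L (Formula.bot (Λ := Λ) (P := P) (V := V) X) 𝒱 = ∅ :=
  Set.subset_empty_iff.1 <| Set.sInter_subset_of_mem (by simp [sem])

theorem mem_sem_bigOr {X : V2} {l : List (Formula Λ P V V2)} {v : V → L.S} :
    v ∈ sem L (bigOr X l) 𝒱 ↔ ∃ φ ∈ l, v ∈ sem L φ 𝒱 := by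
  induction l with
  | nil => simp [bigOr, sem_bot]
  | cons φ l ih => simp [bigOr, mem_sem_or, ← ih]

theorem sem_mu_eq {X : V2} {φ : Formula Λ P V V2} {S : Set (V → L.S)}
    (hpre : sem L φ (Function.update 𝒱 X S) ⊆ S)
    (hleast : ∀ Z, sem L φ (Function.update 𝒱 X Z) ⊆ Z → S ⊆ Z) :
    sem L (.mu X φ) 𝒱 = S :=
  (Set.sInter_subset_of_mem hpre).antisymm (Set.subset_sInter hleast)

def Formula.DoesNotBind (X : V2) : Formula Λ P V V2 → Prop
  | .prop _ _ | .svar _ => True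
  | .neg φ | .dia _ _ φ | .repl _ φ => φ.DoesNotBind X
  | .and φ ψ => φ.DoesNotBind X ∧ ψ.DoesNotBind X
  | .mu Y φ => Y ≠ X ∧ φ.DoesNotBind X

theorem sem_substNeg {X : V2} {φ : Formula Λ P V V2} (h : φ.DoesNotBind X) :
    sem L (φ.substNeg X) 𝒱 = sem L φ (Function.update 𝒱 X (𝒱 X)ᶜ) := by
  induction φ generalizing 𝒱 with
  | prop p x => rfl
  | svar Y =>
    by_cases hYX : Y = X
    · subst hYX
      simp [Formula.substNeg, sem]
    · simp [Formula.substNeg, sem, hYX]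
  | neg φ ih => simp only [Formula.substNeg, sem, ih h]
  | and φ ψ ih₁ ih₂ => simp only [Formula.substNeg, sem, ih₁ h.1, ih₂ h.2]
  | dia a x φ ih => simp only [Formula.substNeg, sem, ih h]
  | mu Y φ ih =>
    obtain ⟨hYX, hφ⟩ := h
    simp only [Formula.substNeg, sem, ih hφ, Function.update_of_ne (Ne.symm hYX),
      Function.update_comm hYX]
  | repl κ φ ih => simp only [Formula.substNeg, sem, ih h]

theorem mem_sem_nu {X : V2} {φ : Formula Λ P V V2} (h : φ.DoesNotBind X) {v : V → L.S} :
    v ∈ sem L (.nu X φ) 𝒱 ↔ ∃ Q, Q ⊆ sem L φ (Function.update 𝒱 X Q) ∧ v ∈ Q := by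
  simp only [Formula.nu, sem, sem_substNeg h, Function.update_self, Function.update_idem,
    Set.mem_compl_iff, Set.mem_sInter, Set.mem_ofPred_eq, not_forall, exists_prop]
  constructor
  · rintro ⟨Q, hQ, hv⟩
    exact ⟨Qᶜ, Set.compl_subset_comm.1 hQ, hv⟩
  · rintro ⟨Q, hQ, hv⟩
    exact ⟨Qᶜ, by rwa [compl_compl, Set.compl_subset_compl], not_not.2 hv⟩

end Semantics

section Synch

variable {Alph : Type} [Fintype Alph] {L : LTS Alph P} {𝒱 : ℕ → Set (Fin 2 → L.S)}

def SynchStep (L : LTS Alph P) (v v' : Fin 2 → L.S) : Prop :=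
  ∃ a, L.Tr (v 0) a (v' 0) ∧ L.Tr (v 1) a (v' 1)

theorem mem_sem_synch {φ : Formula Alph P (Fin 2) ℕ} {v : Fin 2 → L.S} :
    v ∈ sem L (synch φ) 𝒱 ↔ ∃ v', SynchStep L v v' ∧ v' ∈ sem L φ 𝒱 := by
  simp only [synch, mem_sem_bigOr, List.mem_map, Finset.mem_toList, Finset.mem_univ, true_and,
    exists_exists_eq_and, sem, Set.mem_ofPred_eq]
  constructor
  · rintro ⟨a, s, hs, t, ht, hv⟩
    exact ⟨_, ⟨a, by simpa using hs, by simpa using ht⟩, hv⟩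
  · rintro ⟨v', ⟨a, h₀, h₁⟩, hv'⟩
    refine ⟨a, v' 0, h₀, v' 1, by simpa using h₁, ?_⟩
    convert hv'
    ext i
    fin_cases i <;> simp

theorem doesNotBind_synch {X : ℕ} (hX : X ≠ 9) {φ : Formula Alph P (Fin 2) ℕ}
    (h : φ.DoesNotBind X) : (synch φ).DoesNotBind X := by
  rw [synch]
  generalize (Finset.univ : Finset Alph).toList = l
  induction l with
  | nil => exact ⟨hX.symm, trivial⟩
  | cons a l ih => exact show _ ∧ _ from ⟨h, ih⟩

theorem sem_mu_or_synch {X : ℕ} {ψ : Formula Alph P (Fin 2) ℕ} {G : Set (Fin 2 → L.S)}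
    (hψ : ∀ Z, sem L ψ (Function.update 𝒱 X Z) = G) :
    sem L (.mu X (.or ψ (synch (.svar X)))) 𝒱 =
      {v | ∃ u, ReflTransGen (SynchStep L) v u ∧ u ∈ G} := by
  refine sem_mu_eq (fun v hv => ?_) ?_
  · simp only [mem_sem_or, hψ, mem_sem_synch, sem, Function.update_self] at hv
    rcases hv with hv | ⟨v', hvv', u, hv'u, hu⟩
    · exact ⟨v, .refl, hv⟩
    · exact ⟨u, hv'u.head hvv', hu⟩
  · rintro Z hZ v ⟨u, hvu, hu⟩
    induction hvu using ReflTransGen.head_induction_on with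
    | refl => exact hZ (mem_sem_or.2 (.inl ((hψ Z).symm ▸ hu)))
    | head hvv' _ ih =>
      exact hZ (mem_sem_or.2 (.inr (mem_sem_synch.2 ⟨_, hvv', by simpa [sem] using ih⟩)))

theorem sem_mu_synch_or_and {X : ℕ} {ψ χ : Formula Alph P (Fin 2) ℕ} {Q C : Set (Fin 2 → L.S)}
    (hψ : ∀ Z, sem L ψ (Function.update 𝒱 X Z) = Q)
    (hχ : ∀ Z, sem L χ (Function.update 𝒱 X Z) = C) :
    sem L (.mu X (synch (.or ψ (.and χ (.svar X))))) 𝒱 =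
      {v | ∃ c, ReflTransGen (fun a b => SynchStep L a b ∧ b ∈ C) v c ∧
        ∃ q ∈ Q, SynchStep L c q} := by
  refine sem_mu_eq (fun v hv => ?_) ?_
  · simp only [mem_sem_synch, mem_sem_or, hψ, sem, hχ, Function.update_self,
      Set.mem_inter_iff] at hv
    rcases hv with ⟨v', hvv', hv' | ⟨hv'C, c, hv'c, q, hq, hcq⟩⟩
    · exact ⟨v, .refl, v', hv', hvv'⟩
    · exact ⟨c, hv'c.head ⟨hvv', hv'C⟩, q, hq, hcq⟩
  · rintro Z hZ v ⟨c, hvc, q, hq, hcq⟩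
    induction hvc using ReflTransGen.head_induction_on with
    | refl => exact hZ (mem_sem_synch.2 ⟨q, hcq, mem_sem_or.2 (.inl ((hψ Z).symm ▸ hq))⟩)
    | head hvv' _ ih =>
      refine hZ (mem_sem_synch.2 ⟨_, hvv'.1, mem_sem_or.2 (.inr ?_)⟩)
      exact ⟨(hχ Z).symm ▸ hvv'.2, by simpa [sem] using ih⟩

end Synch

section Inclusion

variable {Alph : Type} [Fintype Alph]

def finalAt (L : LTS Alph Unit) (i : Fin 2) : Set (Fin 2 → L.S) := {v | () ∈ L.rho (v i)}

noncomputable def phiRecur (Alph : Type) [Fintype Alph] : Formula Alph Unit (Fin 2) ℕ :=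
  Formula.nu 0 (.and (finalF 0) (.and (.neg (finalF 1))
    (.mu 1 (synch (.or (.svar 0) (.and (.neg (finalF 1)) (.svar 1)))))))

variable {L : LTS Alph Unit} {𝒱 : ℕ → Set (Fin 2 → L.S)}

theorem mem_sem_phiRecur {v : Fin 2 → L.S} :
    v ∈ sem L (phiRecur Alph) 𝒱 ↔ ∃ Q, v ∈ Q ∧ Q ⊆ finalAt L 0 ∩ (finalAt L 1)ᶜ ∧
      IsRecurrentSet (fun a b => SynchStep L a b ∧ b ∈ (finalAt L 1)ᶜ) Q := by
  have huntil : ∀ Q, sem L (.mu 1 (synch (.or (.svar 0) (.and (.neg (finalF 1)) (.svar 1)))))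
      (Function.update 𝒱 0 Q) = {v | ∃ c, ReflTransGen (fun a b => SynchStep L a b ∧
        b ∈ (finalAt L 1)ᶜ) v c ∧ ∃ q ∈ Q, SynchStep L c q} := fun Q =>
    sem_mu_synch_or_and (fun Z => by simp [sem]) (fun Z => rfl)
  rw [phiRecur, mem_sem_nu (by
    simpa [Formula.DoesNotBind, finalF] using
      doesNotBind_synch (by decide) (by simp [Formula.DoesNotBind, Formula.or]))]
  refine exists_congr fun Q => ⟨fun ⟨hQ, hv⟩ => ⟨hv, fun q hq => ⟨(hQ hq).1, (hQ hq).2.1⟩,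
    fun q hq => ?_⟩, fun ⟨hv, hQ, hrec⟩ => ⟨fun q hq => ⟨(hQ hq).1, (hQ hq).2, ?_⟩, hv⟩⟩
  · -- As `Q` avoids `final(y)`, the last step into `Q` is a step through `¬final(y)` too.
    obtain ⟨c, hqc, q', hq', hcq'⟩ := (huntil Q).le (hQ hq).2.2
    exact ⟨q', hq', TransGen.tail' hqc ⟨hcq', (hQ hq').2.1⟩⟩
  · obtain ⟨q', hq', hqq'⟩ := hrec q hq
    obtain ⟨c, hqc, hcq', -⟩ := TransGen.tail'_iff.1 hqq'
    exact (huntil Q).ge ⟨c, hqc, q', hq', hcq'⟩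

theorem mem_sem_phiIncl {v : Fin 2 → L.S} :
    v ∈ sem L (phiIncl Alph) 𝒱 ↔ ∃ f : ℕ → (Fin 2 → L.S), f 0 = v ∧
      (∀ n, SynchStep L (f n) (f (n + 1))) ∧ (∀ᶠ n in atTop, f n ∈ (finalAt L 1)ᶜ) ∧
      ∃ᶠ n in atTop, f n ∈ finalAt L 0 := by
  rw [exists_fair_seq_iff,
    show phiIncl Alph = .mu 2 (.or (phiRecur Alph) (synch (.svar 2))) from rfl,
    sem_mu_or_synch fun _ => Set.ext fun _ => mem_sem_phiRecur]
  rfl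

end Inclusion

section Buchi

variable {Alph : Type} {A B : LTS Alph Unit} {w : ℕ → Alph}

theorem mem_buchiLang_iff :
    w ∈ BuchiLang A ↔ ∃ r, IsRun A w r ∧ ∃ᶠ i in atTop, () ∈ A.rho (r i) := by
  simp only [BuchiLang, frequently_atTop, Set.mem_ofPred_eq]

theorem Complete.exists_isRun (h : Complete A) (w : ℕ → Alph) : ∃ r, IsRun A w r := by
  choose next hnext using h
  exact ⟨fun i => Nat.rec A.s0 (fun i s => next s (w i)) i, rfl, fun i => hnext _ _⟩

theorem Deterministic.isRun_unique (h : Deterministic A) {r r' : ℕ → A.S} (hr : IsRun A w r)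
    (hr' : IsRun A w r') : r = r' := by
  funext i
  induction i with
  | zero => rw [hr.1, hr'.1]
  | succ i ih => exact h _ _ _ _ (hr.2 i) (ih ▸ hr'.2 i)

theorem Deterministic.notMem_buchiLang_iff (h : Deterministic A) {r : ℕ → A.S}
    (hr : IsRun A w r) : w ∉ BuchiLang A ↔ ∀ᶠ i in atTop, () ∉ A.rho (r i) := by
  simp only [mem_buchiLang_iff, ← not_frequently, not_exists, not_and]
  exact ⟨fun hw => hw r hr, fun hw r' hr' => h.isRun_unique hr hr' ▸ hw⟩

theorem exists_mem_diff_buchiLang_iff (hdet : Deterministic B) (hcomp : Complete B) :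
    (∃ w, w ∈ BuchiLang A ∧ w ∉ BuchiLang B) ↔ ∃ w rA rB, IsRun A w rA ∧ IsRun B w rB ∧
      (∀ᶠ i in atTop, () ∉ B.rho (rB i)) ∧ ∃ᶠ i in atTop, () ∈ A.rho (rA i) := by
  constructor
  · rintro ⟨w, hwA, hwB⟩
    obtain ⟨rA, hrA, hA⟩ := mem_buchiLang_iff.1 hwA
    obtain ⟨rB, hrB⟩ := hcomp.exists_isRun w
    exact ⟨w, rA, rB, hrA, hrB, (hdet.notMem_buchiLang_iff hrB).1 hwB, hA⟩
  · rintro ⟨w, rA, rB, hrA, hrB, hB, hA⟩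
    exact ⟨w, mem_buchiLang_iff.2 ⟨rA, hrA, hA⟩, (hdet.notMem_buchiLang_iff hrB).2 hB⟩

theorem synchStep_dunion_iff {a a' : A.S} {b b' : B.S} :
    SynchStep (dunion A B) ![.inl a, .inr b] ![.inl a', .inr b'] ↔
      ∃ c, A.Tr a c a' ∧ B.Tr b c b' :=
  Iff.rfl

theorem exists_eq_pair_of_synchStep_dunion {a : A.S} {b : B.S} {u : Fin 2 → (dunion A B).S}
    (h : SynchStep (dunion A B) ![.inl a, .inr b] u) : ∃ a' b', u = ![.inl a', .inr b'] := by
  obtain ⟨c, h₀, h₁⟩ := h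
  obtain ⟨a', ha'⟩ : ∃ a', u 0 = .inl a' := by
    cases hu : u 0 with
    | inl a' => exact ⟨a', rfl⟩
    | inr _ => rw [hu] at h₀; exact h₀.elim
  obtain ⟨b', hb'⟩ : ∃ b', u 1 = .inr b' := by
    cases hu : u 1 with
    | inl _ => rw [hu] at h₁; exact h₁.elim
    | inr b' => exact ⟨b', rfl⟩
  refine ⟨a', b', ?_⟩
  ext i
  fin_cases i
  exacts [ha', hb']

theorem exists_fair_synch_path_dunion_iff :
    (∃ f : ℕ → (Fin 2 → (dunion A B).S), f 0 = ![.inl A.s0, .inr B.s0] ∧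
      (∀ n, SynchStep _ (f n) (f (n + 1))) ∧ (∀ᶠ n in atTop, f n ∈ (finalAt _ 1)ᶜ) ∧
      ∃ᶠ n in atTop, f n ∈ finalAt _ 0) ↔
    ∃ w rA rB, IsRun A w rA ∧ IsRun B w rB ∧
      (∀ᶠ i in atTop, () ∉ B.rho (rB i)) ∧ ∃ᶠ i in atTop, () ∈ A.rho (rA i) := by
  constructor
  · rintro ⟨f, hf0, hf, hB, hA⟩
    have hpair : ∀ n, ∃ p : A.S × B.S, f n = ![.inl p.1, .inr p.2] := by
      intro n
      induction n with
      | zero => exact ⟨(A.s0, B.s0), hf0⟩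
      | succ n ih =>
        obtain ⟨p, hp⟩ := ih
        obtain ⟨a', b', h⟩ := exists_eq_pair_of_synchStep_dunion (hp ▸ hf n)
        exact ⟨(a', b'), h⟩
    choose p hp using hpair
    have hstep : ∀ n, ∃ c, A.Tr (p n).1 c (p (n + 1)).1 ∧ B.Tr (p n).2 c (p (n + 1)).2 := by
      intro n
      have h := hf n
      rw [hp n, hp (n + 1)] at h
      exact synchStep_dunion_iff.1 h
    choose w hwA hwB using hstep
    have hp0 := (hp 0).symm.trans hf0
    refine ⟨w, fun n => (p n).1, fun n => (p n).2, ⟨Sum.inl.inj (congrFun hp0 0), hwA⟩,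
      ⟨Sum.inr.inj (congrFun hp0 1), hwB⟩, hB.mono fun n h => ?_, hA.mono fun n h => ?_⟩
    · rwa [hp n] at h
    · rwa [hp n] at h
  · rintro ⟨w, rA, rB, hrA, hrB, hB, hA⟩
    refine ⟨fun n => ![.inl (rA n), .inr (rB n)], by simp only [hrA.1, hrB.1], fun n => ?_, hB, hA⟩
    exact synchStep_dunion_iff.2 ⟨w n, hrA.2 n, hrB.2 n⟩

end Buchi

theorem buchi_inclusion_iff_not_phiIncl_general {Alph : Type} [Fintype Alph] (A B : LTS Alph Unit)
    (hdet : Deterministic B) (hcomp : Complete B)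
    (v : Fin 2 → (dunion A B).S) (hvx : v 0 = .inl A.s0) (hvy : v 1 = .inr B.s0) :
    BuchiLang A ⊆ BuchiLang B ↔ v ∉ sem (dunion A B) (phiIncl Alph) (fun _ => ∅) := by
  have hv : v = ![.inl A.s0, .inr B.s0] := by
    ext i
    fin_cases i
    exacts [hvx, hvy]
  rw [hv, mem_sem_phiIncl, exists_fair_synch_path_dunion_iff,
    ← exists_mem_diff_buchiLang_iff hdet hcomp, ← Set.not_subset, not_not]

/-- for nondeterministic Büchi automata `A`, `B` over a finite alphabet,
with `B` deterministic and complete, `L(A) ⊆ L(B)` iff `φ_incl` fails in the disjoint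
union `L_{A,B}` at every valuation `v` with `v x = s_A` and `v y = s_B`. -/
theorem buchi_inclusion_iff_not_phiIncl {Alph : Type} [Fintype Alph] (A B : LTS Alph Unit)
    [Fintype A.S] [Fintype B.S] (hdet : Deterministic B) (hcomp : Complete B)
    (v : Fin 2 → (dunion A B).S) (hvx : v 0 = .inl A.s0) (hvy : v 1 = .inr B.s0) :
    BuchiLang A ⊆ BuchiLang B ↔ v ∉ sem (dunion A B) (phiIncl Alph) (fun _ => ∅) :=
  buchi_inclusion_iff_not_phiIncl_general A B hdet hcomp v hvx hvy
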